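/- For each integer k ≥ 1, let c_k be the complex number −1/(k+1) + i·(2(k+1)²−1)/(2(k+1)²) and let r_k = 1/(2(k+1)²). Then |c_k − c_{k+1}| = r_k + r_{k+1} (so the circles with centers c_k, c_{k+1} and radii r_k, r_{k+1} are externally tangent), and the point P_k = (−(2k+3) + (2k²+6k+4)·i)/(2k²+6k+5) satisfies |P_k| = 1, |P_k − c_k| = r_k, and |P_k − c_{k+1}| = r_{k+1}. That is, the tangency point of the k-th and (k+1)-st depth circles lies on the unit circle. -/

import Mathlib

open Complex

/-!
With `n = k + 1`, the `k`-th depth circle has center `(-1/n, 1 - 1/(2n²))` and radius `1/(2n²)`,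
and `P k` is the point `(-(2n+1), 2n(n+1)) / (n² + (n+1)²)`. Each claim is then a rational
identity in `n`; `P k` lies on the unit circle because `(2n+1, 2n(n+1), n² + (n+1)²)` is a
Pythagorean triple.
-/

/-- The center of the `k`-th depth circle `D_{W_k}`. -/
noncomputable def c (k : ℕ) : ℂ :=
  -1 / ((k : ℂ) + 1) + Complex.I * ((2 * ((k : ℂ) + 1) ^ 2 - 1) / (2 * ((k : ℂ) + 1) ^ 2))

/-- The radius of the `k`-th depth circle `D_{W_k}`. -/
noncomputable def r (k : ℕ) : ℝ := 1 / (2 * ((k : ℝ) + 1) ^ 2)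

/-- The tangency point of the `k`-th and `(k+1)`-st depth circles. -/
noncomputable def P (k : ℕ) : ℂ :=
  (-(2 * (k : ℂ) + 3) + (2 * (k : ℂ) ^ 2 + 6 * (k : ℂ) + 4) * Complex.I) /
    (2 * (k : ℂ) ^ 2 + 6 * (k : ℂ) + 5)

namespace DepthCircle

noncomputable def center (n : ℝ) : ℂ := ⟨-1 / n, 1 - 1 / (2 * n ^ 2)⟩

noncomputable def radius (n : ℝ) : ℝ := 1 / (2 * n ^ 2)

noncomputable def tangencyPoint (n : ℝ) : ℂ :=
  ⟨-(2 * n + 1) / (n ^ 2 + (n + 1) ^ 2), 2 * n * (n + 1) / (n ^ 2 + (n + 1) ^ 2)⟩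

theorem norm_eq_of_re_sq_add_im_sq {z : ℂ} {a : ℝ} (ha : 0 ≤ a)
    (h : z.re ^ 2 + z.im ^ 2 = a ^ 2) : ‖z‖ = a := by
  rw [Complex.norm_def, Complex.normSq_apply, ← sq, ← sq, h, Real.sqrt_sq ha]

theorem sq_add_succ_sq_pos (n : ℝ) : 0 < n ^ 2 + (n + 1) ^ 2 := by
  nlinarith [sq_nonneg (2 * n + 1)]

theorem radius_nonneg (n : ℝ) : 0 ≤ radius n := by
  unfold radius
  positivity

theorem norm_center_sub_center_succ {n : ℝ} (hn : n ≠ 0) (hn' : n + 1 ≠ 0) :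
    ‖center n - center (n + 1)‖ = radius n + radius (n + 1) :=
  norm_eq_of_re_sq_add_im_sq (add_nonneg (radius_nonneg _) (radius_nonneg _)) <| by
    simp only [center, radius, sub_re, sub_im]
    field_simp
    ring

theorem norm_tangencyPoint (n : ℝ) : ‖tangencyPoint n‖ = 1 :=
  norm_eq_of_re_sq_add_im_sq zero_le_one <| by
    have := (sq_add_succ_sq_pos n).ne'
    simp only [tangencyPoint]
    field_simp
    ring

theorem norm_tangencyPoint_sub_center {n : ℝ} (hn : n ≠ 0) :
    ‖tangencyPoint n - center n‖ = radius n :=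
  norm_eq_of_re_sq_add_im_sq (radius_nonneg _) <| by
    have := (sq_add_succ_sq_pos n).ne'
    simp only [tangencyPoint, center, radius, sub_re, sub_im]
    field_simp
    ring

theorem norm_tangencyPoint_sub_center_succ {n : ℝ} (hn' : n + 1 ≠ 0) :
    ‖tangencyPoint n - center (n + 1)‖ = radius (n + 1) :=
  norm_eq_of_re_sq_add_im_sq (radius_nonneg _) <| by
    have := (sq_add_succ_sq_pos n).ne'
    simp only [tangencyPoint, center, radius, sub_re, sub_im]
    field_simp
    ring

end DepthCircle

open DepthCircle

theorem c_eq_center (k : ℕ) : c k = center (k + 1) := by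
  have : (k : ℂ) + 1 ≠ 0 := by exact_mod_cast k.succ_ne_zero
  rw [center, mk_eq_add_mul_I, c]
  push_cast
  field_simp

theorem r_eq_radius (k : ℕ) : r k = radius (k + 1) := rfl

theorem P_eq_tangencyPoint (k : ℕ) : P k = tangencyPoint (k + 1) := by
  rw [tangencyPoint, mk_eq_add_mul_I, P]
  push_cast
  ring

theorem depth_circles_tangency_general (k : ℕ) :
    ‖c k - c (k + 1)‖ = r k + r (k + 1) ∧
    ‖P k‖ = 1 ∧
    ‖P k - c k‖ = r k ∧
    ‖P k - c (k + 1)‖ = r (k + 1) := by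
  have hn : (k : ℝ) + 1 ≠ 0 := by positivity
  have hn' : (k : ℝ) + 1 + 1 ≠ 0 := by positivity
  simp only [c_eq_center, r_eq_radius, P_eq_tangencyPoint, Nat.cast_add, Nat.cast_one]
  exact ⟨norm_center_sub_center_succ hn hn', norm_tangencyPoint _,
    norm_tangencyPoint_sub_center hn, norm_tangencyPoint_sub_center_succ hn'⟩

/-- Consecutive depth circles `D_{W_k}`, `D_{W_{k+1}}` are externally tangent,
and their tangency point lies on the unit circle. -/
theorem depth_circles_tangency (k : ℕ) (hk : 1 ≤ k) :
    ‖c k - c (k + 1)‖ = r k + r (k + 1) ∧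
    ‖P k‖ = 1 ∧
    ‖P k - c k‖ = r k ∧
    ‖P k - c (k + 1)‖ = r (k + 1) :=
  depth_circles_tangency_general k
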